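/- There is an absolute constant c > 0 such that the following holds. Let d+ > d− > 0 satisfy d+ − d− ≥ c√(d+ ln d+) with d+ bounded below by a sufficiently large absolute constant, let G be a locally finite graph with σ : V(G) → {±1}, let C be the core, and let v be a vertex such that G_v is a finite tree. Then for every w ∈ C_v \ {v} and every t > h_{w→v}: μ_{w→w_{↑v}}(t|G,σ) = μ_{w→w_{↑v}}(h_{w→v}+1|G,σ) = μ_{w→w_{↑v}}(t|G,σ_C), where μ(·|G,σ) denotes Warning Propagation initialized with U = V(G) and μ(·|G,σ_C) with U = C. -/

import Mathlib

/-!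
A core vertex has so many core neighbours of its own colour that, whatever the other incoming
messages are, Warning Propagation keeps sending its own colour, for every initialisation that
agrees with `σ` on the core. A vertex of `C_v` outside the core has all its neighbours in `C_v`,
so in the tree `G_v` its message towards `w_{↑v}` is the clamped sum of the messages of its
children, whose hanging subtrees are strictly lower. Induction on `h_{w→v}` then shows that the
message is the same for every `t > h_{w→v}` and both initialisations.
-/

open Filter Topology

attribute [local instance] Classical.propDecidable

set_option linter.unusedVariables false

noncomputable section


/-! ### Basic functions -/

/-- The clamping function `ψ` restricted to the integers. -/
def psiZ (x : ℤ) : ℤ := max (-1) (min 1 x)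

/-- The threshold function `ψ̃` restricted to the integers. -/
def tpsiZ (x : ℤ) : ℤ := if x ≤ -1 then -1 else 1

/-- `p : ℤ → ℝ` represents a probability measure on `{-1, 0, 1}`. -/
def IsProbOn3 (p : ℤ → ℝ) : Prop :=
  (∀ z, 0 ≤ p z) ∧ (∀ z : ℤ, z ∉ ({-1, 0, 1} : Set ℤ) → p z = 0) ∧ p (-1) + p 0 + p 1 = 1

/-- `p` is skewed: `p(1) ≥ 1 - d₊⁻¹⁰`. -/
def Skewed (dp : ℝ) (p : ℤ → ℝ) : Prop := 1 - (dp ^ 10)⁻¹ ≤ p 1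

/-- The point mass at `1`, i.e. `(0,0,1)`. -/
def delta1 : ℤ → ℝ := fun z => if z = 1 then 1 else 0

/-! ### The operator `T` -/

/-- Convolution of two mass functions on `ℤ`. -/
def convZ (a b : ℤ → ℝ) : ℤ → ℝ := fun z => ∑' w : ℤ, a w * b (z - w)

/-- `n`-fold convolution power (distribution of a sum of `n` i.i.d. copies). -/
def convPow (a : ℤ → ℝ) : ℕ → ℤ → ℝ
  | 0 => fun z => if z = 0 then 1 else 0
  | n + 1 => convZ (convPow a n) a

/-- Poisson mass function with mean `d`. -/
def poisP (d : ℝ) (k : ℕ) : ℝ := Real.exp (-d) * d ^ k / (Nat.factorial k)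

/-- Distribution of `-η` when `η` has distribution `a`. -/
def flipM (a : ℤ → ℝ) : ℤ → ℝ := fun z => a (-z)

/-- The distribution of `Z_p = ∑_{i=1}^{γ₊} η_i - ∑_{i=γ₊+1}^{γ₊+γ₋} η_i` where the `η_i`
are i.i.d. with distribution `p` and `γ₊ ~ Po(d₊)`, `γ₋ ~ Po(d₋)` are independent. -/
def Zdist (dp dm : ℝ) (p : ℤ → ℝ) : ℤ → ℝ := fun z =>
  ∑' k : ℕ, ∑' l : ℕ, poisP dp k * poisP dm l * convZ (convPow p k) (convPow (flipM p) l) z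

/-- The operator `𝒯 = 𝒯_{d₊,d₋}`: the distribution of `ψ(Z_p)`. -/
def Twp (dp dm : ℝ) (p : ℤ → ℝ) : ℤ → ℝ := fun z =>
  if z = 1 then ∑' m : ℕ, Zdist dp dm p (1 + (m : ℤ))
  else if z = 0 then Zdist dp dm p 0
  else if z = -1 then ∑' m : ℕ, Zdist dp dm p (-1 - (m : ℤ))
  else 0

/-- The value `Z` as a function of the outcomes `η : Fin (k+l) → ℤ`, where the first `k`
coordinates form the `γ₊`-group and the remaining `l` the `γ₋`-group. -/
def zsum (k l : ℕ) (η : Fin (k + l) → ℤ) : ℤ :=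
  (∑ j ∈ Finset.univ.filter (fun j : Fin (k + l) => (j : ℕ) < k), η j)
    - ∑ j ∈ Finset.univ.filter (fun j : Fin (k + l) => k ≤ (j : ℕ)), η j

/-- Conditional expectation of
`∑_{i=1}^{γ₊} 1{η_i = -ψ̃(Z)} + ∑_{i=γ₊+1}^{γ₊+γ₋} 1{η_i = ψ̃(Z)}` given `γ₊ = k, γ₋ = l`. -/
def innerPhi (p : ℤ → ℝ) (k l : ℕ) : ℝ :=
  ∑ η ∈ Fintype.piFinset (fun _ : Fin (k + l) => ({-1, 0, 1} : Finset ℤ)),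
    (∏ i, p (η i)) *
      (((Finset.univ.filter (fun i : Fin (k + l) =>
            (i : ℕ) < k ∧ η i = - tpsiZ (zsum k l η))).card : ℝ)
        + ((Finset.univ.filter (fun i : Fin (k + l) =>
            k ≤ (i : ℕ) ∧ η i = tpsiZ (zsum k l η))).card : ℝ))

/-- The functional `φ_{d₊,d₋}`. -/
def phiOp (dp dm : ℝ) (p : ℤ → ℝ) : ℝ :=
  (1 / 2) * ∑' k : ℕ, ∑' l : ℕ, poisP dp k * poisP dm l * innerPhi p k l

/-! ### The L¹-Wasserstein distance on measures on `{-1,0,1}` -/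

/-- `ℓ₁(p,q)`: infimum of `E |X - Y|` over couplings of `p` and `q`. -/
def ell1 (p q : ℤ → ℝ) : ℝ :=
  sInf { r | ∃ ν : ℤ × ℤ → ℝ, (∀ x y, 0 ≤ ν (x, y)) ∧
    (∀ x, ∑ y ∈ ({-1, 0, 1} : Finset ℤ), ν (x, y) = p x) ∧
    (∀ y, ∑ x ∈ ({-1, 0, 1} : Finset ℤ), ν (x, y) = q y) ∧
    r = ∑ x ∈ ({-1, 0, 1} : Finset ℤ), ∑ y ∈ ({-1, 0, 1} : Finset ℤ),
          |(x : ℝ) - (y : ℝ)| * ν (x, y) }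





/-! ### Graphs: restriction, cuts, the core, Warning Propagation -/

/-- Every neighbourhood in a graph on a finite vertex type is finite. -/
noncomputable instance fintypeNeighborSet {V : Type*} [Fintype V] (G : SimpleGraph V) (v : V) :
    Fintype (G.neighborSet v) := Fintype.ofFinite _

/-- The subgraph of `G` consisting of the edges inside `S` (the induced subgraph on `S`,
viewed as a graph on the ambient vertex set; vertices outside `S` are isolated). -/
def restrictG {V : Type*} (G : SimpleGraph V) (S : Set V) : SimpleGraph V where
  Adj x y := G.Adj x y ∧ x ∈ S ∧ y ∈ S
  symm := ⟨fun x y h => ⟨G.adj_symm h.1, h.2.2, h.2.1⟩⟩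
  loopless := ⟨fun x h => G.irrefl h.1⟩

/-- `cut(G, σ)` for the boundary condition `σ` on `U`: the least number of edges of `G` joining
vertices of different colours, over all `±1`-colourings `τ` agreeing with `σ` on `U`.
(The set of ordered pairs of adjacent bichromatic vertices has twice the size of the
corresponding edge set.) -/
def cutW {V : Type*} (G : SimpleGraph V) (U : Set V) (σ : V → ℤ) : ℕ :=
  sInf { k | ∃ τ : V → ℤ, (∀ x, τ x = 1 ∨ τ x = -1) ∧ (∀ x ∈ U, τ x = σ x) ∧
    2 * k = {p : V × V | G.Adj p.1 p.2 ∧ τ p.1 ≠ τ p.2}.ncard }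

/-- The defining property of the core. -/
def CoreProp {V : Type*} (G : SimpleGraph V) (σ : V → ℤ) (dp dm c : ℝ) (U : Set V) : Prop :=
  ∀ u ∈ U,
    |(({w | G.Adj u w ∧ σ u * σ w = 1}.ncard : ℝ) - dp)| ≤ c / 4 * Real.sqrt (dp * Real.log dp) ∧
    |(({w | G.Adj u w ∧ σ u * σ w = -1}.ncard : ℝ) - dm)| ≤ c / 4 * Real.sqrt (dp * Real.log dp) ∧
    ({w | G.Adj u w} \ U).ncard ≤ 100

/-- The core: the largest subset satisfying `CoreProp`, i.e. the union of all such subsets. -/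
def coreSet {V : Type*} (G : SimpleGraph V) (σ : V → ℤ) (dp dm c : ℝ) : Set V :=
  ⋃₀ { U | CoreProp G σ dp dm c U }

/-- The sets `C_v^{(t)}`. -/
def CvStage {V : Type*} (G : SimpleGraph V) (K : Set V) (v : V) : ℕ → Set V
  | 0 => {v} ∪ {w | G.Adj v w}
  | t + 1 => CvStage G K v t ∪ ⋃ u ∈ (CvStage G K v t \ K), {w | G.Adj u w}

/-- The set `C_v = ⋃_t C_v^{(t)}`. -/
def CvSet {V : Type*} (G : SimpleGraph V) (K : Set V) (v : V) : Set V :=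
  ⋃ t, CvStage G K v t

/-- Warning Propagation messages `μ_{v→w}(t | G, σ)` with initial condition `σ` on `U`. -/
def wpMsg {V : Type*} (G : SimpleGraph V) [∀ v : V, Fintype (G.neighborSet v)]
    (U : Set V) (σ : V → ℤ) : ℕ → V → V → ℤ
  | 0, v, _ => if v ∈ U then σ v else 0
  | t + 1, v, w => psiZ (∑ u ∈ (G.neighborFinset v).erase w, wpMsg G U σ t u v)

/-- `μ_v(t|G,σ) = ∑_{w ∈ ∂v} μ_{w→v}(t|G,σ)`. -/
def wpVal {V : Type*} (G : SimpleGraph V) [∀ v : V, Fintype (G.neighborSet v)]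
    (U : Set V) (σ : V → ℤ) (t : ℕ) (v : V) : ℤ :=
  ∑ w ∈ G.neighborFinset v, wpMsg G U σ t w v

/-- The maximum distance from `w` to any vertex reachable from `w` in `G`. -/
def hgt {V : Type*} (G : SimpleGraph V) (w : V) : ℕ :=
  sSup ((G.dist w) '' { u | G.Reachable w u })

/-- `G_v`: the subgraph of `G` induced on `C_v` (ambient form). -/
def GvG {V : Type*} (G : SimpleGraph V) (K : Set V) (v : V) : SimpleGraph V :=
  restrictG G (CvSet G K v)

/-- `w_{↑v}`: the neighbour of `w` on the path from `w` to `v` in `G_v`. -/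
def parentOf {V : Type*} (G : SimpleGraph V) (K : Set V) (v w : V) : V :=
  @Classical.epsilon V ⟨v⟩ fun x =>
    (GvG G K v).Adj w x ∧ (GvG G K v).dist x v + 1 = (GvG G K v).dist w v

/-- `G_v` with the edge `{w, w_{↑v}}` removed. -/
def GdelG {V : Type*} (G : SimpleGraph V) (K : Set V) (v w : V) : SimpleGraph V :=
  (GvG G K v).deleteEdges {s(w, parentOf G K v w)}

/-- `h_{w→v}`: the maximum distance between `w` and any other vertex of `G_{w→v}`. -/
def hdir {V : Type*} (G : SimpleGraph V) (K : Set V) (v w : V) : ℕ :=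
  hgt (GdelG G K v w) w

/-- `C_{w→v}`: the vertex set of the component of `w` in `G_v` minus the edge `{w, w_{↑v}}`. -/
def Cdir {V : Type*} (G : SimpleGraph V) (K : Set V) (v w : V) : Set V :=
  { u | (GdelG G K v w).Reachable w u }

/-- `G_{w→v}`: the component of `w` in `G_v` minus the edge `{w, w_{↑v}}`. -/
def Gdir {V : Type*} (G : SimpleGraph V) (K : Set V) (v w : V) : SimpleGraph V :=
  restrictG (GdelG G K v w) (Cdir G K v w)

/-- `h_v`: the maximum distance between `v` and any other vertex of `G_v`. -/
def hvG {V : Type*} (G : SimpleGraph V) (K : Set V) (v : V) : ℕ :=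
  hgt (GvG G K v) v

/-- `μ*_{w→v} = μ_{w→w_{↑v}}(h_{w→v}+1 | G, σ)`. -/
def muStarDir {V : Type*} (G : SimpleGraph V) [∀ v : V, Fintype (G.neighborSet v)]
    (K : Set V) (σ : V → ℤ) (v w : V) : ℤ :=
  wpMsg G Set.univ σ (hdir G K v w + 1) w (parentOf G K v w)

/-- `μ*_v = μ_v(h_v+1 | G, σ)`. -/
def muStarV {V : Type*} (G : SimpleGraph V) [∀ v : V, Fintype (G.neighborSet v)]
    (K : Set V) (σ : V → ℤ) (v : V) : ℤ :=
  wpVal G Set.univ σ (hvG G K v + 1) v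

/-- The ball of radius `t` around `v` in `G`. -/
def ballSet {V : Type*} (G : SimpleGraph V) (v : V) (t : ℕ) : Set V :=
  { u | G.Reachable v u ∧ G.dist v u ≤ t }

lemma mem_ballSet_self {V : Type*} (G : SimpleGraph V) (v : V) (t : ℕ) : v ∈ ballSet G v t :=
  ⟨SimpleGraph.Reachable.refl v, by simp [SimpleGraph.dist_self]⟩

/-- `∂^t(G,r,σ) ≅ ∂^t(H,r',τ)`: a root- and label-preserving isomorphism between the
balls of radius `t`. -/
def RootedBallIso {V W : Type*} (G : SimpleGraph V) (σ : V → ℤ) (r : V)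
    (H : SimpleGraph W) (τ : W → ℤ) (r' : W) (t : ℕ) : Prop :=
  ∃ φ : (G.induce (ballSet G r t)) ≃g (H.induce (ballSet H r' t)),
    φ ⟨r, mem_ballSet_self G r t⟩ = ⟨r', mem_ballSet_self H r' t⟩ ∧
    ∀ x, τ (φ x).1 = σ x.1





/-! ### The planted bisection model -/

/-- `σ` is a balanced bipartition: the two class sizes differ by at most one. -/
def BalancedPart {n : ℕ} (σ : Fin n → Bool) : Prop :=
  (((Finset.univ.filter (fun v => σ v = true)).card : ℤ)
    - ((Finset.univ.filter (fun v => σ v = false)).card : ℤ)).natAbs ≤ 1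

/-- The number of balanced bipartitions of `Fin n`. -/
def Nbal (n : ℕ) : ℕ := (Finset.univ.filter (fun σ : Fin n → Bool => BalancedPart σ)).card

/-- The probability `p_{σ(v)σ(w)}` of the edge `{v,w}`, where `p₊ = 2d₊/n`, `p₋ = 2d₋/n`. -/
def pairProb (dp dm : ℝ) (n : ℕ) (σ : Fin n → Bool) (v w : Fin n) : ℝ :=
  if σ v = σ w then 2 * dp / n else 2 * dm / n

/-- The probability mass of an outcome `ω = (σ, g)` of the planted bisection model
`G(n, 2d₊/n, 2d₋/n)`: `σ` is a uniformly random balanced bipartition and, independently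
for each pair `v ≠ w`, the edge `{v,w}` is present with probability `p_{σ(v)σ(w)}`. -/
def pbMass (dp dm : ℝ) (n : ℕ) (ω : (Fin n → Bool) × (Fin n → Fin n → Bool)) : ℝ :=
  (if BalancedPart ω.1 ∧ (∀ v w, ω.2 v w = ω.2 w v) ∧ (∀ v, ω.2 v v = false)
    then ((Nbal n : ℝ))⁻¹ else 0) *
  ∏ p ∈ Finset.univ.filter (fun p : Fin n × Fin n => p.1 < p.2),
    (if ω.2 p.1 p.2 = true then pairProb dp dm n ω.1 p.1 p.2
      else 1 - pairProb dp dm n ω.1 p.1 p.2)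

/-- The probability of an event in the planted bisection model. -/
def pbPr (dp dm : ℝ) (n : ℕ) (A : (Fin n → Bool) × (Fin n → Fin n → Bool) → Prop) : ℝ :=
  ∑ ω ∈ Finset.univ.filter A, pbMass dp dm n ω

/-- Sign of a Boolean, as `±1`. -/
def sgnB (b : Bool) : ℤ := if b then 1 else -1

/-- The planted assignment `σ : [n] → {±1}` of an outcome. -/
def pbSigma {n : ℕ} (ω : (Fin n → Bool) × (Fin n → Fin n → Bool)) : Fin n → ℤ :=
  fun v => sgnB (ω.1 v)

/-- The graph of an outcome. -/
def pbGraph (n : ℕ) (g : Fin n → Fin n → Bool) : SimpleGraph (Fin n) :=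
  SimpleGraph.fromRel fun v w => g v w = true

/-- The minimum bisection width `bis(G)`: the least number of edges joining `S` and its
complement over all `S` with `||S| - |S̄|| ≤ 1`. -/
def bisWidth {n : ℕ} (G : SimpleGraph (Fin n)) : ℕ :=
  sInf { k | ∃ S : Finset (Fin n),
    ((S.card : ℤ) - ((n : ℤ) - (S.card : ℤ))).natAbs ≤ 1 ∧
    k = {p : Fin n × Fin n | G.Adj p.1 p.2 ∧ p.1 ∈ S ∧ p.2 ∉ S}.ncard }

/-! ### Finite rooted typed trees and the two-type Galton–Watson tree -/

/-- Finite rooted trees whose vertices carry a type in `ℤ` (used with types `±1`). -/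
inductive GWT : Type
  | node : ℤ → List GWT → GWT

instance : Inhabited GWT := ⟨.node 0 []⟩

/-- The type of the root. -/
def GWT.typeOf : GWT → ℤ
  | .node s _ => s

/-- The subtrees pending on the children of the root. -/
def GWT.childrenOf : GWT → List GWT
  | .node _ l => l

/-- Valid positions (vertices) of a tree, encoded as lists of child indices. -/
def GWT.valid : GWT → List ℕ → Prop
  | _, [] => True
  | T, i :: p => i < T.childrenOf.length ∧ GWT.valid (T.childrenOf.getD i default) p

/-- The type of the vertex at position `q`. -/
def GWT.typeAt : GWT → List ℕ → ℤ
  | T, [] => T.typeOf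
  | T, i :: p => GWT.typeAt (T.childrenOf.getD i default) p

/-- The tree as a simple graph on its set of positions. -/
def GWT.graph (T : GWT) : SimpleGraph { p : List ℕ // T.valid p } where
  Adj a b := (∃ i : ℕ, (b : List ℕ) = (a : List ℕ) ++ [i]) ∨
             (∃ i : ℕ, (a : List ℕ) = (b : List ℕ) ++ [i])
  symm := ⟨fun a b h => h.symm⟩
  loopless := ⟨fun a h => by
    rcases h with ⟨i, hi⟩ | ⟨i, hi⟩ <;>
      · have := congrArg List.length hi
        simp at this⟩

/-- The root of the tree. -/
def GWT.root (T : GWT) : { p : List ℕ // T.valid p } := ⟨[], trivial⟩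

/-- The type labelling of the vertices. -/
def GWT.lab (T : GWT) : { p : List ℕ // T.valid p } → ℤ := fun q => T.typeAt q.1

/-- The Warning Propagation message `μ_{r↑}(t)` sent by the root of a tree towards its
(imaginary) parent, when the messages are initialised with the types. -/
def GWT.rootMsg : ℕ → GWT → ℤ
  | 0, T => T.typeOf
  | t + 1, T => psiZ ((T.childrenOf.map (GWT.rootMsg t)).sum)

/-- The probability mass function of the depth-`t` truncation of the two-type Galton–Watson
tree with root type `s`, realised as a random *ordered* tree: the root spawns `Po(d₊ + d₋)`
children, each independently of type `s` with probability `d₊/(d₊+d₋)` and of type `-s`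
with probability `d₋/(d₊+d₋)`, and the subtrees pending on the children are independent
Galton–Watson trees truncated at depth `t-1`. -/
def ogwMass (dp dm : ℝ) : ℕ → ℤ → GWT → ℝ
  | 0, s, T => if T.typeOf = s ∧ T.childrenOf = [] then 1 else 0
  | t + 1, s, T =>
    if T.typeOf = s then
      Real.exp (-(dp + dm)) / (Nat.factorial T.childrenOf.length) *
        (T.childrenOf.map fun U => (if U.typeOf = s then dp else dm)
          * ogwMass dp dm t U.typeOf U).prod
    else 0


end

section WarningPropagation

variable {V : Type*} {G : SimpleGraph V} [∀ v : V, Fintype (G.neighborSet v)]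

lemma psiZ_eq_of_one_le_mul {s z : ℤ} (hs : s = 1 ∨ s = -1) (h : 1 ≤ s * z) : psiZ z = s := by
  rcases hs with rfl | rfl <;> simp only [psiZ] <;> omega

lemma abs_wpMsg_le_one {U : Set V} {σ : V → ℤ} (hσ : ∀ x, |σ x| ≤ 1) (t : ℕ) (u x : V) :
    |wpMsg G U σ t u x| ≤ 1 := by
  cases t with
  | zero => unfold wpMsg; split <;> simp [hσ]
  | succ t => simp only [wpMsg, psiZ]; rw [abs_le]; omega

/-- The margin `2` leaves a strict majority after discarding the recipient of a message. -/
def IsSelfSupporting (G : SimpleGraph V) [∀ v : V, Fintype (G.neighborSet v)] (σ : V → ℤ)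
    (K : Set V) : Prop :=
  ∀ u ∈ K, ((G.neighborFinset u).filter fun y => ¬(y ∈ K ∧ σ y = σ u)).card + 2 ≤
    ((G.neighborFinset u).filter fun y => y ∈ K ∧ σ y = σ u).card

theorem wpMsg_eq_of_isSelfSupporting {U K : Set V} {σ : V → ℤ}
    (hσ : ∀ x, σ x = 1 ∨ σ x = -1) (hK : IsSelfSupporting G σ K) (hKU : K ⊆ U) (t : ℕ) :
    ∀ u ∈ K, ∀ x, wpMsg G U σ t u x = σ u := by
  induction t with
  | zero => intro u hu x; simp [wpMsg, hKU hu]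
  | succ t ih =>
    intro u hu x
    rw [wpMsg]
    have hσ' : ∀ x, |σ x| ≤ 1 := fun x => by rcases hσ x with h | h <;> simp [h]
    set good : V → Prop := fun y => y ∈ K ∧ σ y = σ u
    set N := (G.neighborFinset u).erase x
    have hmargin : ((G.neighborFinset u).filter fun y => ¬good y).card + 2 ≤
        ((G.neighborFinset u).filter good).card := hK u hu
    have hsq : σ u * σ u = 1 := by rcases hσ u with h | h <;> simp [h]
    have hterm : ∀ y ∈ N, (if good y then 1 else -1) ≤ σ u * wpMsg G U σ t y u := by
      intro y _
      split_ifs with hy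
      · rw [ih y hy.1, hy.2, hsq]
      · have := abs_le.1 (abs_wpMsg_le_one (G := G) (U := U) hσ' t y u)
        rcases hσ u with h | h <;> rw [h] <;> omega
    have hgood : ((G.neighborFinset u).filter good).card ≤ (N.filter good).card + 1 := by
      rw [Finset.filter_erase]
      exact Nat.le_succ_of_pred_le Finset.pred_card_le_card_erase
    have hbad : (N.filter fun y => ¬good y).card ≤
        ((G.neighborFinset u).filter fun y => ¬good y).card :=
      Finset.card_le_card (Finset.filter_subset_filter _ (Finset.erase_subset _ _))
    have hsum : ((N.filter good).card : ℤ) - (N.filter fun y => ¬good y).card ≤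
        σ u * ∑ y ∈ N, wpMsg G U σ t y u := by
      rw [Finset.mul_sum]
      refine le_trans (le_of_eq ?_) (Finset.sum_le_sum hterm)
      rw [Finset.sum_ite, Finset.sum_const, Finset.sum_const]
      simp only [nsmul_eq_mul, mul_one, mul_neg]
      ring
    exact psiZ_eq_of_one_le_mul (hσ u) (by omega)

end WarningPropagation

section Core

variable {V : Type*} {G : SimpleGraph V} [∀ v : V, Fintype (G.neighborSet v)]

lemma coreProp_coreSet (σ : V → ℤ) (dp dm c : ℝ) : CoreProp G σ dp dm c (coreSet G σ dp dm c) := by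
  rintro u ⟨U, hU, huU⟩
  obtain ⟨hplus, hminus, hout⟩ := hU u huU
  refine ⟨hplus, hminus, le_trans (Set.ncard_le_ncard ?_ ?_) hout⟩
  · exact Set.sdiff_subset_sdiff_right (Set.subset_sUnion_of_mem hU)
  · exact (Set.toFinite (G.neighborSet u)).subset fun _ hz => hz.1

lemma ncard_setOf_adj_and (u : V) (p : V → Prop) [DecidablePred p] :
    {w | G.Adj u w ∧ p w}.ncard = ((G.neighborFinset u).filter p).card := by
  rw [← Set.ncard_coe_finset]
  congr 1
  ext
  simp

lemma card_filter_le_card_filter_add {s : Finset V} {p q r : V → Prop} [DecidablePred p]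
    [DecidablePred q] [DecidablePred r] (h : ∀ y ∈ s, p y → q y ∨ r y) :
    (s.filter p).card ≤ (s.filter q).card + (s.filter r).card := by
  refine (Finset.card_le_card fun y hy => ?_).trans (Finset.card_union_le _ _)
  simp only [Finset.mem_union, Finset.mem_filter] at hy ⊢
  rcases h y hy.1 hy.2 with h' | h'
  · exact Or.inl ⟨hy.1, h'⟩
  · exact Or.inr ⟨hy.1, h'⟩

/-- Same-coloured core neighbours number at least `|∂₊u| - 100`, the others at most
`|∂₋u| + 100`, and `|∂₊u| - |∂₋u| ≥ c/2 · √(d₊ ln d₊) ≥ 202`. -/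
theorem CoreProp.isSelfSupporting {σ : V → ℤ} (hσ : ∀ x, σ x = 1 ∨ σ x = -1) {dp dm c : ℝ}
    {K : Set V} (hK : CoreProp G σ dp dm c K)
    (hgap : c * Real.sqrt (dp * Real.log dp) ≤ dp - dm)
    (hlarge : 404 ≤ c * Real.sqrt (dp * Real.log dp)) :
    IsSelfSupporting G σ K := by
  intro u hu
  obtain ⟨hplus, hminus, hout⟩ := hK u hu
  rw [ncard_setOf_adj_and] at hplus hminus
  rw [show {w | G.Adj u w} \ K = {w | G.Adj u w ∧ w ∉ K} from rfl, ncard_setOf_adj_and] at hout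
  rw [abs_le] at hplus hminus
  have hsame : (((G.neighborFinset u).filter fun y => σ u * σ y = 1).card : ℝ) ≤
      ((G.neighborFinset u).filter fun y => y ∈ K ∧ σ y = σ u).card +
        ((G.neighborFinset u).filter fun y => y ∉ K).card := by
    refine mod_cast card_filter_le_card_filter_add fun y _ hy => ?_
    rcases hσ u with h | h <;> rcases hσ y with h' | h' <;> by_cases y ∈ K <;> simp_all
  have hother : (((G.neighborFinset u).filter fun y => ¬(y ∈ K ∧ σ y = σ u)).card : ℝ) ≤
      ((G.neighborFinset u).filter fun y => σ u * σ y = -1).card +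
        ((G.neighborFinset u).filter fun y => y ∉ K).card := by
    refine mod_cast card_filter_le_card_filter_add fun y _ hy => ?_
    rcases hσ u with h | h <;> rcases hσ y with h' | h' <;> by_cases y ∈ K <;> simp_all
  have hout' : (((G.neighborFinset u).filter fun y => y ∉ K).card : ℝ) ≤ 100 := mod_cast hout
  have hmargin : (((G.neighborFinset u).filter fun y => ¬(y ∈ K ∧ σ y = σ u)).card : ℝ) + 2 ≤
      ((G.neighborFinset u).filter fun y => y ∈ K ∧ σ y = σ u).card := by
    linarith
  exact_mod_cast hmargin

lemma le_sqrt_mul_log {dp : ℝ} (hdp : 10 ^ 6 ≤ dp) : 404 ≤ Real.sqrt (dp * Real.log dp) := by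
  have hlog : 1 ≤ Real.log dp := by
    rw [Real.le_log_iff_exp_le (by linarith)]
    linarith [Real.exp_one_lt_d9]
  rw [Real.le_sqrt (by norm_num) (by nlinarith)]
  nlinarith

end Core

namespace SimpleGraph

variable {V : Type*} {H : SimpleGraph V}

lemma Reachable.exists_adj_dist_add_one_eq {w v : V} (h : H.Reachable w v) (hne : w ≠ v) :
    ∃ x, H.Adj w x ∧ H.dist x v + 1 = H.dist w v := by
  obtain ⟨p, hp⟩ := h.exists_walk_length_eq_dist
  cases p with
  | nil => exact absurd rfl hne
  | cons hadj q =>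
    refine ⟨_, hadj, le_antisymm ?_ ?_⟩
    · rw [← hp, Walk.length_cons]
      exact Nat.add_le_add_right (dist_le q) 1
    · obtain ⟨r, hr⟩ := q.reachable.exists_walk_length_eq_dist
      simpa [hr] using dist_le (Walk.cons hadj r)

lemma IsAcyclic.dist_eq_length (hH : H.IsAcyclic) {u v : V} {p : H.Walk u v} (hp : p.IsPath) :
    H.dist u v = p.length := by
  obtain ⟨q, hq, hlen⟩ := p.reachable.exists_path_of_dist
  have := congrArg (fun r : H.Path u v => r.1.length)
    ((hH.subsingleton_path u v).elim ⟨p, hp⟩ ⟨q, hq⟩)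
  simp only at this
  omega

lemma IsAcyclic.eq_of_adj_of_dist_add_one_eq (hH : H.IsAcyclic) {w v x₁ x₂ : V}
    (h₁ : H.Adj w x₁) (h₂ : H.Adj w x₂) (hr₁ : H.Reachable x₁ v) (hr₂ : H.Reachable x₂ v)
    (hd₁ : H.dist x₁ v + 1 = H.dist w v) (hd₂ : H.dist x₂ v + 1 = H.dist w v) : x₁ = x₂ := by
  have hpath : ∀ x (h : H.Adj w x), H.Reachable x v → H.dist x v + 1 = H.dist w v →
      ∃ q : H.Walk x v, (Walk.cons h q).IsPath := by
    intro x h hr hd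
    obtain ⟨q, hq, hlen⟩ := hr.exists_path_of_dist
    refine ⟨q, hq.cons fun hw => ?_⟩
    have := dist_le (q.dropUntil w hw)
    have := q.length_dropUntil_le_length hw
    omega
  obtain ⟨q₁, hq₁⟩ := hpath x₁ h₁ hr₁ hd₁
  obtain ⟨q₂, hq₂⟩ := hpath x₂ h₂ hr₂ hd₂
  simpa using congrArg (fun r : H.Path w v => r.1.snd)
    ((hH.subsingleton_path w v).elim ⟨_, hq₁⟩ ⟨_, hq₂⟩)

lemma IsAcyclic.dist_eq_add_one_of_adj_of_ne (hH : H.IsAcyclic) {w v x y : V}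
    (hx : H.Adj w x) (hy : H.Adj w y) (hr : H.Reachable w v)
    (hd : H.dist x v + 1 = H.dist w v) (hyx : y ≠ x) : H.dist y v = H.dist w v + 1 := by
  rw [dist_comm, dist_comm (u := w)]
  refine (hH.dist_eq_dist_add_one_of_adj_of_reachable v hy hr.symm).resolve_left fun h => hyx ?_
  exact hH.eq_of_adj_of_dist_add_one_eq hy hx (hy.symm.reachable.trans hr)
    (hx.symm.reachable.trans hr) (by rw [dist_comm, ← h, dist_comm]) hd

/-- A shortest path from `y` avoiding `yw` cannot pass through `w` (the forest has no cycle), so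
prefixing the edge `wy` gives a path from `w` avoiding `wx`. -/
lemma IsAcyclic.dist_deleteEdges_eq_add_one (hH : H.IsAcyclic) {w x y z : V}
    (hwy : H.Adj w y) (hyx : y ≠ x) (hz : (H.deleteEdges {s(y, w)}).Reachable y z) :
    (H.deleteEdges {s(w, x)}).Reachable w z ∧
      (H.deleteEdges {s(w, x)}).dist w z = (H.deleteEdges {s(y, w)}).dist y z + 1 := by
  obtain ⟨P, hP, hlen⟩ := hz.exists_path_of_dist
  have hwP : w ∉ P.support := by
    intro hw
    cases P with
    | nil => exact hwy.ne (by simpa using hw)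
    | cons h Q =>
      have hsnd := hH.eq_snd_of_adj_start (hP.mapLe (deleteEdges_le _)) hwy.symm
        (by rwa [Walk.support_mapLe_eq_support])
      simp only [Walk.mapLe, Walk.map_cons, Walk.snd_cons] at hsnd
      subst hsnd
      exact (deleteEdges_adj.1 h).2 rfl
  have hadj : (H.deleteEdges {s(w, x)}).Adj w y :=
    deleteEdges_adj.2 ⟨hwy, by simp [hyx, hwy.ne']⟩
  have hedges : ∀ e ∈ P.edges, e ∈ (H.deleteEdges {s(w, x)}).edgeSet := by
    intro e he
    rw [edgeSet_deleteEdges]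
    refine ⟨edgeSet_mono (deleteEdges_le _) (P.edges_subset_edgeSet he), ?_⟩
    rintro rfl
    exact hwP (P.fst_mem_support_of_mem_edges he)
  have hQ : (Walk.cons hadj (P.transfer _ hedges)).IsPath :=
    (hP.transfer hedges).cons (by rwa [Walk.support_transfer])
  refine ⟨(Walk.cons hadj (P.transfer _ hedges)).reachable, ?_⟩
  rw [(hH.anti (deleteEdges_le _)).dist_eq_length hQ, Walk.length_cons, Walk.length_transfer,
    hlen]

end SimpleGraph

open SimpleGraph

lemma hgt_lt_hgt {V : Type*} {G₁ G₂ : SimpleGraph V} {a b : V}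
    (hfin : {z | G₂.Reachable b z}.Finite)
    (h : ∀ z, G₁.Reachable a z → G₂.Reachable b z ∧ G₂.dist b z = G₁.dist a z + 1) :
    hgt G₁ a < hgt G₂ b := by
  have hfin₁ : {z | G₁.Reachable a z}.Finite := hfin.subset fun z hz => (h z hz).1
  obtain ⟨z, hz, hza⟩ :=
    Set.Nonempty.csSup_mem (⟨_, a, Reachable.refl a, rfl⟩ : (G₁.dist a '' _).Nonempty)
      (hfin₁.image (G₁.dist a))
  calc hgt G₁ a = G₁.dist a z := hza.symm
    _ < G₂.dist b z := by rw [(h z hz).2]; omega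
    _ ≤ hgt G₂ b := le_csSup (hfin.image _).bddAbove ⟨z, (h z hz).1, rfl⟩

section Restrict

variable {V : Type*} {G : SimpleGraph V} {S : Set V}

lemma SimpleGraph.Reachable.mem_of_le_restrictG {H : SimpleGraph V} (hle : H ≤ restrictG G S)
    {x y : V} (h : H.Reachable x y) (hx : x ∈ S) : y ∈ S := by
  obtain ⟨p⟩ := h
  induction p with
  | nil => exact hx
  | cons h _ ih => exact ih (hle h).2.2

lemma reachable_restrictG (h : (G.induce S).Preconnected) {x y : V} (hx : x ∈ S) (hy : y ∈ S) :
    (restrictG G S).Reachable x y :=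
  (h ⟨x, hx⟩ ⟨y, hy⟩).map
    (⟨Subtype.val, fun {a b} hab => ⟨hab, a.2, b.2⟩⟩ : G.induce S →g restrictG G S)

lemma isAcyclic_restrictG (h : (G.induce S).IsAcyclic) : (restrictG G S).IsAcyclic := by
  intro x c hc
  have hle : restrictG G S ≤ G := fun _ _ hadj => hadj.1
  have hxS : x ∈ S := by
    cases c with
    | nil => exact (hc.not_nil Walk.Nil.nil).elim
    | cons hadj _ => exact hadj.2.1
  have hS : ∀ y ∈ (c.mapLe hle).support, y ∈ S := by
    rw [Walk.support_mapLe_eq_support]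
    exact fun y hy => (c.takeUntil y hy).reachable.mem_of_le_restrictG le_rfl hxS
  refine h ((c.mapLe hle).induce S hS) ?_
  rw [← Walk.isCycle_map_iff_of_injective (f := (Embedding.induce S).toHom)
    (Embedding.induce (G := G) S).injective, Walk.map_induce]
  exact hc.mapLe hle

end Restrict

section DirectedMessages

variable {V : Type*} {G : SimpleGraph V} {K : Set V} {v : V}

lemma mem_CvSet_self : v ∈ CvSet G K v := Set.mem_iUnion.2 ⟨0, Or.inl rfl⟩

lemma mem_CvSet_of_adj {w u : V} (hw : w ∈ CvSet G K v) (hwK : w ∉ K) (hadj : G.Adj w u) :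
    u ∈ CvSet G K v := by
  obtain ⟨t, ht⟩ := Set.mem_iUnion.1 hw
  exact Set.mem_iUnion.2 ⟨t + 1, Or.inr (Set.mem_biUnion ⟨ht, hwK⟩ hadj)⟩

lemma isAcyclic_GvG (htree : (G.induce (CvSet G K v)).IsTree) : (GvG G K v).IsAcyclic :=
  isAcyclic_restrictG htree.isAcyclic

lemma reachable_GvG (htree : (G.induce (CvSet G K v)).IsTree) {w : V} (hw : w ∈ CvSet G K v) :
    (GvG G K v).Reachable w v :=
  reachable_restrictG htree.connected.preconnected hw mem_CvSet_self

lemma parentOf_spec (htree : (G.induce (CvSet G K v)).IsTree) {w : V} (hw : w ∈ CvSet G K v)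
    (hwv : w ≠ v) :
    (GvG G K v).Adj w (parentOf G K v w) ∧
      (GvG G K v).dist (parentOf G K v w) v + 1 = (GvG G K v).dist w v :=
  Classical.epsilon_spec ((reachable_GvG htree hw).exists_adj_dist_add_one_eq hwv)

lemma parentOf_eq_of_adj (htree : (G.induce (CvSet G K v)).IsTree) {w y : V}
    (hw : w ∈ CvSet G K v) (hwv : w ≠ v) (hy : (GvG G K v).Adj w y)
    (hyp : y ≠ parentOf G K v w) : y ≠ v ∧ parentOf G K v y = w := by
  have hacyc := isAcyclic_GvG htree
  obtain ⟨hpadj, hpdist⟩ := parentOf_spec htree hw hwv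
  have hdist := hacyc.dist_eq_add_one_of_adj_of_ne hpadj hy (reachable_GvG htree hw) hpdist hyp
  have hyv : y ≠ v := by
    rintro rfl
    simp at hdist
  obtain ⟨hqadj, hqdist⟩ := parentOf_spec htree hy.2.2 hyv
  exact ⟨hyv, hacyc.eq_of_adj_of_dist_add_one_eq hqadj hy.symm
    (reachable_GvG htree hqadj.2.2) (reachable_GvG htree hw) hqdist hdist.symm⟩

lemma hdir_lt_of_adj (hfin : (CvSet G K v).Finite) (htree : (G.induce (CvSet G K v)).IsTree)
    {w y : V} (hw : w ∈ CvSet G K v) (hwv : w ≠ v) (hy : (GvG G K v).Adj w y)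
    (hyp : y ≠ parentOf G K v w) : hdir G K v y < hdir G K v w := by
  have hpar := (parentOf_eq_of_adj htree hw hwv hy hyp).2
  refine hgt_lt_hgt (hfin.subset fun z hz => hz.mem_of_le_restrictG (deleteEdges_le _) hw)
    fun z hz => ?_
  unfold GdelG at hz ⊢
  rw [hpar] at hz ⊢
  exact (isAcyclic_GvG htree).dist_deleteEdges_eq_add_one hy hyp hz

theorem wpMsg_parentOf_eq [∀ x : V, Fintype (G.neighborSet x)] {σ : V → ℤ}
    (hσ : ∀ x, σ x = 1 ∨ σ x = -1) (hK : IsSelfSupporting G σ K)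
    (hfin : (CvSet G K v).Finite) (htree : (G.induce (CvSet G K v)).IsTree)
    {U U' : Set V} (hU : K ⊆ U) (hU' : K ⊆ U') {w : V} (hw : w ∈ CvSet G K v) (hwv : w ≠ v)
    {t t' : ℕ} (ht : hdir G K v w < t) (ht' : hdir G K v w < t') :
    wpMsg G U σ t w (parentOf G K v w) = wpMsg G U' σ t' w (parentOf G K v w) := by
  induction hn : hdir G K v w using Nat.strong_induction_on generalizing w t t' with
  | _ n ih =>
  by_cases hwK : w ∈ K
  · rw [wpMsg_eq_of_isSelfSupporting hσ hK hU t w hwK,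
      wpMsg_eq_of_isSelfSupporting hσ hK hU' t' w hwK]
  obtain ⟨s, rfl⟩ : ∃ s, t = s + 1 := ⟨t - 1, by omega⟩
  obtain ⟨s', rfl⟩ : ∃ s', t' = s' + 1 := ⟨t' - 1, by omega⟩
  rw [wpMsg, wpMsg]
  congr 1
  refine Finset.sum_congr rfl fun y hy => ?_
  obtain ⟨hyp, hy⟩ := Finset.mem_erase.1 hy
  have hadj : G.Adj w y := (G.mem_neighborFinset w y).1 hy
  have hy' : (GvG G K v).Adj w y := ⟨hadj, hw, mem_CvSet_of_adj hw hwK hadj⟩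
  obtain ⟨hyv, hpar⟩ := parentOf_eq_of_adj htree hw hwv hy' hyp
  have hlt := hdir_lt_of_adj hfin htree hw hwv hy' hyp
  have := ih _ (hn ▸ hlt) hy'.2.2 hyv (t := s) (t' := s') (by omega) (by omega) rfl
  rwa [hpar] at this

end DirectedMessages

/-- Lemma 3.2 (1): for `w ∈ C_v \ {v}` and `t > h_{w→v}`,
`μ_{w→w_{↑v}}(t|G,σ) = μ_{w→w_{↑v}}(h_{w→v}+1|G,σ) = μ_{w→w_{↑v}}(t|G,σ_C)`. -/
theorem directed_messages_stabilise :
    ∃ c : ℝ, 0 < c ∧ ∃ D : ℝ, ∀ dp dm : ℝ,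
    0 < dm → dm < dp → D ≤ dp → c * Real.sqrt (dp * Real.log dp) ≤ dp - dm →
    ∀ (V : Type*) (G : SimpleGraph V) [∀ v : V, Fintype (G.neighborSet v)] (σ : V → ℤ),
    (∀ x : V, σ x = 1 ∨ σ x = -1) →
    ∀ K : Set V, K = coreSet G σ dp dm c →
    ∀ v : V, (CvSet G K v).Finite → (G.induce (CvSet G K v)).IsTree →
    ∀ w ∈ CvSet G K v, w ≠ v →
    ∀ t : ℕ, hdir G K v w < t →
      wpMsg G Set.univ σ t w (parentOf G K v w) = muStarDir G K σ v w ∧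
      wpMsg G K σ t w (parentOf G K v w) = muStarDir G K σ v w := by
  refine ⟨1, one_pos, 10 ^ 6, ?_⟩
  intro dp dm _ _ hD hgap V G _ σ hσ K hK v hfin htree w hw hwv t ht
  have hsupp : IsSelfSupporting G σ K := hK ▸ (coreProp_coreSet σ dp dm 1).isSelfSupporting hσ
    hgap (by simpa using le_sqrt_mul_log hD)
  exact ⟨wpMsg_parentOf_eq hσ hsupp hfin htree (Set.subset_univ K) (Set.subset_univ K) hw hwv ht
      (Nat.lt_succ_self _),
    wpMsg_parentOf_eq hσ hsupp hfin htree le_rfl (Set.subset_univ K) hw hwv ht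
      (Nat.lt_succ_self _)⟩
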